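/- As f → +∞, the effective drag coefficient satisfies ζ(f) = 1 + (1/f²)·∫₀¹ (φ'(x))² dx + O(1/f³); that is, ζ(f) − 1 − (1/f²)·∫₀¹ (φ'(x))² dx is O(f⁻³) as f → +∞. -/

import Mathlib

open MeasureTheory intervalIntegral Asymptotics Filter

noncomputable def w0 (φ : ℝ → ℝ) (f x : ℝ) : ℝ :=
  ∫ s in (0:ℝ)..1, Real.exp (φ (x + s) - φ x - f * s)

noncomputable def M0 (φ : ℝ → ℝ) (f : ℝ) : ℝ := ∫ x in (0:ℝ)..1, w0 φ f x

noncomputable def w1 (φ : ℝ → ℝ) (f x : ℝ) : ℝ :=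
  ∫ s in (0:ℝ)..1, (w0 φ f (x + s)) ^ 2 * Real.exp (φ (x + s) - φ x - f * s)

noncomputable def M1 (φ : ℝ → ℝ) (f : ℝ) : ℝ := ∫ x in (0:ℝ)..1, w1 φ f x

/-! With `g(s) = P(x+s) e^{φ(x+s) - φ(x)}`, integrating `∫₀¹ g(s) e^{-fs} ds` by parts gives
`P(x)(1 - e^{-f})/f` (periodicity makes `g(0) = g(1)`) plus `1/f` times the same integral with the
weight `P` replaced by `P' + P φ'`. Starting from `P = 1`, three steps produce the weights `φ'`,
`φ'' + φ'²` and `φ''' + 3φ'φ'' + φ'³`. After integrating in `x`, the first two contribute `0` and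
`∫₀¹ φ'²` (derivatives of periodic functions have mean zero), and the last integral is `O(1/f)`
since `∫₀¹ e^{-fs} ds ≤ 1/f`. Thus `M₀(f) = (1 - e^{-f})/f · (1 + ∫₀¹ φ'²/f²) + O(f⁻⁴)`, and
multiplying by `f/(1 - e^{-f})` gives the expansion of `ζ`. -/

open Real Function

theorem Function.Periodic.deriv {g : ℝ → ℝ} {c : ℝ} (hg : Periodic g c) :
    Periodic (deriv g) c := fun x => by
  rw [← deriv_comp_add_const, show (fun y => g (y + c)) = g from funext hg]

theorem intervalIntegral.integral_deriv_eq_zero_of_periodic {g g' : ℝ → ℝ} {c : ℝ}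
    (hg : ∀ y, HasDerivAt g (g' y) y) (hg' : Continuous g') (hper : Periodic g c) :
    ∫ y in (0:ℝ)..c, g' y = 0 := by
  rw [integral_eq_sub_of_hasDerivAt (fun y _ => hg y) (hg'.intervalIntegrable 0 c),
    ← zero_add c, hper, sub_self]

theorem integral_exp_neg_mul {f : ℝ} (hf : f ≠ 0) :
    ∫ s in (0:ℝ)..1, exp (-f * s) = (1 - exp (-f)) / f := by
  have hderiv : ∀ s, HasDerivAt (fun s => exp (-f * s) / -f) (exp (-f * s)) s := fun s => by
    refine (((hasDerivAt_id' s).const_mul (-f)).exp.div_const (-f)).congr_deriv ?_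
    field_simp
  rw [integral_eq_sub_of_hasDerivAt (fun s _ => hderiv s)
    ((by fun_prop : Continuous fun s => exp (-f * s)).intervalIntegrable 0 1)]
  simp only [mul_one, mul_zero, exp_zero]
  field_simp
  ring

noncomputable def w0Weighted (φ P : ℝ → ℝ) (f x : ℝ) : ℝ :=
  ∫ s in (0:ℝ)..1, P (x + s) * exp (φ (x + s) - φ x - f * s)

noncomputable def M0Weighted (φ P : ℝ → ℝ) (f : ℝ) : ℝ :=
  ∫ x in (0:ℝ)..1, w0Weighted φ P f x

theorem M0Weighted_one (φ : ℝ → ℝ) (f : ℝ) : M0Weighted φ 1 f = M0 φ f := by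
  simp [M0Weighted, w0Weighted, M0, w0]

theorem continuous_w0Weighted {φ P : ℝ → ℝ} (hφ : Continuous φ) (hP : Continuous P)
    (f : ℝ) : Continuous (w0Weighted φ P f) :=
  continuous_parametric_intervalIntegral_of_continuous' (by fun_prop) 0 1

section IntegrationByParts

variable {φ φ' P P' Q : ℝ → ℝ}

theorem w0Weighted_eq_add (hφ : ∀ y, HasDerivAt φ (φ' y) y) (hφ' : Continuous φ')
    (hφper : Periodic φ 1) (hP : ∀ y, HasDerivAt P (P' y) y) (hP' : Continuous P')
    (hPper : Periodic P 1) (hQ : ∀ y, Q y = P' y + P y * φ' y) {f : ℝ} (hf : f ≠ 0)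
    (x : ℝ) : w0Weighted φ P f x = P x * ((1 - exp (-f)) / f) + w0Weighted φ Q f x / f := by
  set h : ℝ → ℝ := fun s => P (x + s) * exp (φ (x + s) - φ x - f * s)
  have hh : ∀ s, HasDerivAt h (Q (x + s) * exp (φ (x + s) - φ x - f * s) - f * h s) s := by
    intro s
    have := ((hP (x + s)).comp_const_add x s).fun_mul
      ((((hφ (x + s)).comp_const_add x s).sub_const (φ x)).fun_sub
        ((hasDerivAt_id' s).const_mul f)).exp
    refine this.congr_deriv ?_
    rw [hQ]
    simp only [h]
    ring
  have hφc : Continuous φ := continuous_iff_continuousAt.2 fun y => (hφ y).continuousAt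
  have hPc : Continuous P := continuous_iff_continuousAt.2 fun y => (hP y).continuousAt
  have hQc : Continuous Q := by rw [show Q = fun y => P' y + P y * φ' y from funext hQ]; fun_prop
  have hFTC := integral_eq_sub_of_hasDerivAt (fun s _ => hh s)
    ((by fun_prop : Continuous fun s => Q (x + s) * exp (φ (x + s) - φ x - f * s) - f * h s)
      |>.intervalIntegrable 0 1)
  rw [intervalIntegral.integral_sub ((by fun_prop : Continuous _).intervalIntegrable 0 1)
    ((by fun_prop : Continuous _).intervalIntegrable 0 1),
    intervalIntegral.integral_const_mul] at hFTC
  simp only [h, add_zero, mul_zero, mul_one, zero_sub, sub_self, exp_zero, hPper x,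
    hφper x] at hFTC
  unfold w0Weighted
  set I := ∫ s in (0:ℝ)..1, P (x + s) * exp (φ (x + s) - φ x - f * s)
  field_simp
  linear_combination -hFTC

theorem M0Weighted_eq_add (hφ : ∀ y, HasDerivAt φ (φ' y) y) (hφ' : Continuous φ')
    (hφper : Periodic φ 1) (hP : ∀ y, HasDerivAt P (P' y) y) (hP' : Continuous P')
    (hPper : Periodic P 1) (hQ : ∀ y, Q y = P' y + P y * φ' y) {f : ℝ} (hf : f ≠ 0) :
    M0Weighted φ P f =
      (∫ x in (0:ℝ)..1, P x) * ((1 - exp (-f)) / f) + M0Weighted φ Q f / f := by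
  have hφc : Continuous φ := continuous_iff_continuousAt.2 fun y => (hφ y).continuousAt
  have hPc : Continuous P := continuous_iff_continuousAt.2 fun y => (hP y).continuousAt
  have hQc : Continuous Q := by rw [show Q = fun y => P' y + P y * φ' y from funext hQ]; fun_prop
  unfold M0Weighted
  simp_rw [w0Weighted_eq_add hφ hφ' hφper hP hP' hPper hQ hf]
  rw [intervalIntegral.integral_add ((by fun_prop : Continuous _).intervalIntegrable 0 1)
      ((continuous_w0Weighted hφc hQc f).div_const f |>.intervalIntegrable 0 1),
    intervalIntegral.integral_mul_const, intervalIntegral.integral_div]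

end IntegrationByParts

theorem abs_w0Weighted_le {φ P : ℝ → ℝ} {A C f : ℝ} (hPA : ∀ y, |P y| ≤ A)
    (hφC : ∀ y, |φ y| ≤ C) (hf : 0 < f) (x : ℝ) : |w0Weighted φ P f x| ≤ A * exp (2 * C) / f := by
  have hA : 0 ≤ A := (abs_nonneg _).trans (hPA 0)
  have hpt : ∀ s,
      ‖P (x + s) * exp (φ (x + s) - φ x - f * s)‖ ≤ A * exp (2 * C) * exp (-f * s) := by
    intro s
    rw [norm_mul, Real.norm_eq_abs, Real.norm_of_nonneg (exp_pos _).le,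
      show φ (x + s) - φ x - f * s = (φ (x + s) - φ x) + -f * s by ring, exp_add, ← mul_assoc]
    gcongr
    · exact hPA _
    · linarith [(abs_le.1 (hφC (x + s))).2, (abs_le.1 (hφC x)).1]
  calc |w0Weighted φ P f x|
      ≤ ∫ s in (0:ℝ)..1, A * exp (2 * C) * exp (-f * s) :=
        norm_integral_le_of_norm_le zero_le_one (.of_forall fun s _ => hpt s)
          ((by fun_prop : Continuous fun s => A * exp (2 * C) * exp (-f * s)).intervalIntegrable
            0 1)
    _ = A * exp (2 * C) * ((1 - exp (-f)) / f) := by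
        rw [intervalIntegral.integral_const_mul, integral_exp_neg_mul hf.ne']
    _ ≤ A * exp (2 * C) * (1 / f) := by
        gcongr
        linarith [exp_pos (-f)]
    _ = A * exp (2 * C) / f := mul_one_div _ _

theorem exists_abs_M0Weighted_le {φ P : ℝ → ℝ} (hφ : Continuous φ) (hφper : Periodic φ 1)
    (hP : Continuous P) (hPper : Periodic P 1) :
    ∃ K, ∀ f > 0, |M0Weighted φ P f| ≤ K / f := by
  obtain ⟨A, hA⟩ :=
    isBounded_iff_forall_norm_le.1 (hPper.isBounded_of_continuous one_ne_zero hP)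
  obtain ⟨C, hC⟩ :=
    isBounded_iff_forall_norm_le.1 (hφper.isBounded_of_continuous one_ne_zero hφ)
  refine ⟨A * exp (2 * C), fun f hf => ?_⟩
  have := norm_integral_le_of_norm_le_const (a := 0) (b := 1) (f := w0Weighted φ P f)
    fun x _ => abs_w0Weighted_le (fun y => hA _ ⟨y, rfl⟩) (fun y => hC _ ⟨y, rfl⟩) hf x
  simpa [M0Weighted] using this

section ContDiffThree

variable {φ : ℝ → ℝ}

theorem M0_eq_add_M0Weighted (hφ : ContDiff ℝ 3 φ) (hφper : Periodic φ 1) {f : ℝ}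
    (hf : f ≠ 0) : M0 φ f = (1 - exp (-f)) / f * (1 + (∫ x in (0:ℝ)..1, deriv φ x ^ 2) / f ^ 2) +
      M0Weighted φ (fun y => deriv (deriv (deriv φ)) y + 3 * deriv φ y * deriv (deriv φ) y +
        deriv φ y ^ 3) f / f ^ 3 := by
  have h1 : ContDiff ℝ 2 (deriv φ) := hφ.deriv'
  have h2 : ContDiff ℝ 1 (deriv (deriv φ)) := h1.deriv'
  have hd0 : ∀ y, HasDerivAt φ (deriv φ y) y := fun y =>
    (hφ.differentiable (by norm_num) y).hasDerivAt
  have hd1 : ∀ y, HasDerivAt (deriv φ) (deriv (deriv φ) y) y := fun y =>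
    (h1.differentiable (by norm_num) y).hasDerivAt
  have hd2 : ∀ y, HasDerivAt (deriv (deriv φ)) (deriv (deriv (deriv φ)) y) y := fun y =>
    (h2.differentiable one_ne_zero y).hasDerivAt
  have hc1 : Continuous (deriv φ) := h1.continuous
  have hc2 : Continuous (deriv (deriv φ)) := h2.continuous
  have hc3 : Continuous (deriv (deriv (deriv φ))) := h2.continuous_deriv le_rfl
  have hp1 : Periodic (deriv φ) 1 := hφper.deriv
  have hp2 : Periodic (deriv (deriv φ)) 1 := hp1.deriv
  have e0 := M0Weighted_eq_add hd0 hc1 hφper (P := 1) (fun y => hasDerivAt_const y 1)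
    continuous_const (fun _ => rfl) (Q := deriv φ) (fun y => by simp) hf
  have e1 := M0Weighted_eq_add hd0 hc1 hφper hd1 hc2 hp1
    (Q := fun y => deriv (deriv φ) y + deriv φ y ^ 2) (fun y => by ring) hf
  have e2 := M0Weighted_eq_add hd0 hc1 hφper (fun y => (hd2 y).fun_add ((hd1 y).fun_pow 2))
    (by fun_prop) (fun y => by simp only [hp1 y, hp2 y])
    (Q := fun y => deriv (deriv (deriv φ)) y + 3 * deriv φ y * deriv (deriv φ) y +
      deriv φ y ^ 3) (fun y => by ring) hf
  rw [integral_deriv_eq_zero_of_periodic hd0 hc1 hφper] at e1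
  rw [intervalIntegral.integral_add (g := fun x => deriv φ x ^ 2) (hc2.intervalIntegrable 0 1)
      ((hc1.pow 2).intervalIntegrable 0 1),
    integral_deriv_eq_zero_of_periodic hd1 hc2 hp1] at e2
  rw [← M0Weighted_one, e0, e1, e2]
  simp only [Pi.one_apply, intervalIntegral.integral_const, sub_zero, smul_eq_mul, mul_one]
  field_simp
  ring

theorem exists_abs_M0_sub_le (hφ : ContDiff ℝ 3 φ) (hφper : Periodic φ 1) :
    ∃ K, ∀ f > 0,
      |M0 φ f - (1 - exp (-f)) / f * (1 + (∫ x in (0:ℝ)..1, deriv φ x ^ 2) / f ^ 2)| ≤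
        K / f ^ 4 := by
  have h2 : ContDiff ℝ 1 (deriv (deriv φ)) := hφ.deriv'.deriv'
  have hc1 : Continuous (deriv φ) := hφ.continuous_deriv (by norm_num)
  have hc2 : Continuous (deriv (deriv φ)) := h2.continuous
  have hc3 : Continuous (deriv (deriv (deriv φ))) := h2.continuous_deriv le_rfl
  have hp1 : Periodic (deriv φ) 1 := hφper.deriv
  obtain ⟨K, hK⟩ := exists_abs_M0Weighted_le hφ.continuous hφper
    (P := fun y => deriv (deriv (deriv φ)) y + 3 * deriv φ y * deriv (deriv φ) y +
      deriv φ y ^ 3)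
    (by fun_prop)
    (fun y => by simp only [hp1 y, hp1.deriv y, hp1.deriv.deriv y])
  refine ⟨K, fun f hf => ?_⟩
  rw [M0_eq_add_M0Weighted hφ hφper hf.ne', add_sub_cancel_left, abs_div,
    abs_of_pos (by positivity : 0 < f ^ 3)]
  calc _ ≤ K / f / f ^ 3 := by gcongr; exact hK f hf
    _ = K / f ^ 4 := by rw [div_div]; ring

end ContDiffThree

/-- As `f → +∞`, the effective drag coefficient
`ζ(f) = f·M₀(f)/(1 − e^{−f})` satisfies
`ζ(f) = 1 + (1/f²)·∫₀¹ (φ'(x))² dx + O(1/f³)`. -/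
theorem stmt_17 (φ : ℝ → ℝ) (hφ : ContDiff ℝ 3 φ) (hφper : ∀ x, φ (x + 1) = φ x)
    (ζ : ℝ → ℝ) (hζ : ∀ f, ζ f = f * M0 φ f / (1 - Real.exp (-f))) :
    (fun f => ζ f - 1 - (1 / f ^ 2) * ∫ x in (0:ℝ)..1, (deriv φ x) ^ 2)
      =O[atTop] (fun f => 1 / f ^ 3) := by
  obtain ⟨K, hK⟩ := exists_abs_M0_sub_le hφ hφper
  set S := ∫ x in (0:ℝ)..1, deriv φ x ^ 2
  refine IsBigO.of_bound (2 * K) ?_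
  filter_upwards [eventually_ge_atTop 1] with f hf
  have hf0 : 0 < f := by linarith
  have hE : 1 / 2 ≤ 1 - exp (-f) := by
    linarith [exp_le_exp.2 (neg_le_neg hf), exp_neg_one_lt_half]
  have hζf : ζ f - 1 - 1 / f ^ 2 * S =
      f * (M0 φ f - (1 - exp (-f)) / f * (1 + S / f ^ 2)) / (1 - exp (-f)) := by
    rw [hζ]
    field_simp
    ring
  rw [hζf, Real.norm_eq_abs, Real.norm_eq_abs, abs_div, abs_mul, abs_of_pos hf0,
    abs_of_pos (by linarith : 0 < 1 - exp (-f)), abs_of_pos (by positivity : 0 < 1 / f ^ 3)]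
  calc _ ≤ f * |M0 φ f - (1 - exp (-f)) / f * (1 + S / f ^ 2)| / (1 / 2) := by gcongr
    _ ≤ f * (K / f ^ 4) / (1 / 2) := by gcongr; exact hK f hf0
    _ = 2 * K * (1 / f ^ 3) := by field_simp
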